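/- Example Shannon-flow inequality: For every polymatroid h on the four-element ground set {A, B, C, D}, 2·h({A,B,C,D}) ≤ h({A,B}) + h({B,C}) + h({C,D}) + ( h({A,C,D}) − h({A,C}) ) + ( h({A,B,D}) − h({B,D}) ). -/

import Mathlib

/-!
Sum four submodularity inequalities: `ABC, ACD` and `ABD, BCD` each give `ABCD` on the left
(paying `AC` and `BD`), and `ABC`, `BCD` are in turn bounded by `AB + BC − B` and `B + CD`.
The `B` terms cancel and `h ∅ = 0` removes the last intersection.
-/

open Finset

/-- A polymatroid on a finite ground set (here `Fin 4`, with `A = 0`, `B = 1`,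
`C = 2`, `D = 3`): a nonnegative set function with `h ∅ = 0` that is monotone
and submodular. -/
def IsPolymatroid (h : Finset (Fin 4) → ℝ) : Prop :=
  h ∅ = 0 ∧ (∀ S, 0 ≤ h S) ∧ (∀ X Y, X ⊆ Y → h X ≤ h Y) ∧
    (∀ X Y, h (X ∪ Y) + h (X ∩ Y) ≤ h X + h Y)

namespace IsPolymatroid

variable {h : Finset (Fin 4) → ℝ} {X Y U : Finset (Fin 4)}

theorem add_le_add_of_union_of_inter {I : Finset (Fin 4)} (hp : IsPolymatroid h)
    (hU : X ∪ Y = U) (hI : X ∩ Y = I) : h U + h I ≤ h X + h Y :=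
  hU ▸ hI ▸ hp.2.2.2 X Y

theorem le_add_of_union_of_disjoint (hp : IsPolymatroid h) (hU : X ∪ Y = U)
    (hXY : Disjoint X Y) : h U ≤ h X + h Y := by
  have := hp.add_le_add_of_union_of_inter hU (disjoint_iff_inter_eq_empty.mp hXY)
  rwa [hp.1, add_zero] at this

end IsPolymatroid

/-- **Example Shannon-flow inequality:** for every polymatroid `h` on `{A,B,C,D}`,
`2·h(ABCD) ≤ h(AB) + h(BC) + h(CD) + (h(ACD) − h(AC)) + (h(ABD) − h(BD))`. -/
theorem example_shannon_flow_inequality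
    (h : Finset (Fin 4) → ℝ) (hpoly : IsPolymatroid h) :
    2 * h Finset.univ ≤
      h {0, 1} + h {1, 2} + h {2, 3} +
        (h {0, 2, 3} - h {0, 2}) + (h {0, 1, 3} - h {1, 3}) := by
  have hABC_ACD : h univ + h {0, 2} ≤ h {0, 1, 2} + h {0, 2, 3} :=
    hpoly.add_le_add_of_union_of_inter (by decide) (by decide)
  have hABD_BCD : h univ + h {1, 3} ≤ h {0, 1, 3} + h {1, 2, 3} :=
    hpoly.add_le_add_of_union_of_inter (by decide) (by decide)
  have hAB_BC : h {0, 1, 2} + h {1} ≤ h {0, 1} + h {1, 2} :=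
    hpoly.add_le_add_of_union_of_inter (by decide) (by decide)
  have hB_CD : h {1, 2, 3} ≤ h {1} + h {2, 3} :=
    hpoly.le_add_of_union_of_disjoint (by decide) (by decide)
  linarith
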